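/- A real 3×3 matrix E of the form [t]_× R with R ∈ SO(3), t ∈ ℝ³, t ≠ 0 has singular values σ₁ = σ₂ = ‖t‖ and σ₃ = 0. -/
import Mathlib


open Matrix

open Polynomial in
lemma det_sub_eig {n : Type*} [Fintype n] [DecidableEq n] (A : Matrix n n ℝ)
    (hA : A.IsHermitian) (x : ℝ) :
    det (x • (1 : Matrix n n ℝ) - A) = ∏ i, (x - hA.eigenvalues i) := by
  set U := (hA.eigenvectorUnitary : Matrix n n ℝ)
  have h1 : U * star U = 1 := mem_unitaryGroup_iff.mp hA.eigenvectorUnitary.2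
  have h2 : star U * U = 1 := mem_unitaryGroup_iff'.mp hA.eigenvectorUnitary.2
  have key : x • (1 : Matrix n n ℝ) - A
      = U * (x • 1 - diagonal (RCLike.ofReal ∘ hA.eigenvalues)) * star U := by
    rw [mul_sub, sub_mul]
    congr 1
    · rw [mul_smul_comm, smul_mul_assoc, mul_one, h1]
    · exact hA.spectral_theorem
  rw [key, det_mul, det_mul, mul_comm, ← mul_assoc, ← det_mul, h2, det_one, one_mul]
  have : x • (1 : Matrix n n ℝ) - diagonal (RCLike.ofReal ∘ hA.eigenvalues)
      = diagonal (fun i => x - hA.eigenvalues i) := by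
    ext i j
    by_cases h : i = j <;> simp [h, diagonal, Matrix.one_apply, RCLike.ofReal]
  rw [this, det_diagonal]

/-- The skew-symmetric cross-product matrix `[t]ₓ` of a vector `t ∈ ℝ³`. -/
def crossMatrix (t : Fin 3 → ℝ) : Matrix (Fin 3) (Fin 3) ℝ :=
  !![0, -t 2, t 1; t 2, 0, -t 0; -t 1, t 0, 0]

open Polynomial in
theorem essential_matrix_singular_values
    (R : Matrix (Fin 3) (Fin 3) ℝ)
    (hR : R ∈ Matrix.specialOrthogonalGroup (Fin 3) ℝ)
    (t : Fin 3 → ℝ) (ht : t ≠ 0) (E : Matrix (Fin 3) (Fin 3) ℝ)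
    (hE : E = crossMatrix t * R)
    (hHerm : (Eᵀ * E).IsHermitian) :
    (Finset.univ.val.map fun i : Fin 3 => Real.sqrt (hHerm.eigenvalues i)) =
      {Real.sqrt (t ⬝ᵥ t), Real.sqrt (t ⬝ᵥ t), 0} := by
  set s : ℝ := t ⬝ᵥ t with hs
  set lam := hHerm.eigenvalues with hlam
  have hR1 : Rᵀ * R = 1 := by
    have := (Matrix.mem_specialOrthogonalGroup_iff.mp hR).1
    rw [Matrix.mem_orthogonalGroup_iff'] at this
    simpa [Matrix.star_eq_conjTranspose, Matrix.conjTranspose] using this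
  -- determinant computation
  have hdet : ∀ x : ℝ, det (x • (1 : Matrix (Fin 3) (Fin 3) ℝ) - Eᵀ * E)
      = x * (x - s) ^ 2 := by
    intro x
    have hE2 : Eᵀ * E = Rᵀ * ((crossMatrix t)ᵀ * crossMatrix t) * R := by
      rw [hE, transpose_mul]
      noncomm_ring
    set M := (crossMatrix t)ᵀ * crossMatrix t with hM
    have key : x • (1 : Matrix (Fin 3) (Fin 3) ℝ) - Eᵀ * E
        = Rᵀ * (x • 1 - M) * R := by
      rw [hE2, mul_sub, sub_mul]
      congr 1
      rw [mul_smul_comm, smul_mul_assoc, mul_one, hR1]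
    have hdR : det Rᵀ * det R = 1 := by
      rw [← det_mul, hR1, det_one]
    rw [key, det_mul, det_mul, mul_comm, ← mul_assoc, mul_comm (det R), hdR, one_mul]
    have hs3 : s = t 0 ^ 2 + t 1 ^ 2 + t 2 ^ 2 := by
      simp [hs, dotProduct, Fin.sum_univ_three]; ring
    have hMT : (crossMatrix t)ᵀ = !![0, t 2, -t 1; -t 2, 0, t 0; t 1, -t 0, 0] := by
      ext i j
      fin_cases i <;> fin_cases j <;> rfl
    have hM2 : M = !![0, t 2, -t 1; -t 2, 0, t 0; t 1, -t 0, 0] * crossMatrix t := by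
      rw [hM, hMT]
    have hSub : x • (1 : Matrix (Fin 3) (Fin 3) ℝ) - M
        = !![x - (t 1 ^ 2 + t 2 ^ 2), t 0 * t 1, t 0 * t 2;
             t 0 * t 1, x - (t 0 ^ 2 + t 2 ^ 2), t 1 * t 2;
             t 0 * t 2, t 1 * t 2, x - (t 0 ^ 2 + t 1 ^ 2)] := by
      ext i j
      fin_cases i <;> fin_cases j <;>
        (simp [hM2, crossMatrix, Matrix.mul_apply, Fin.sum_univ_three, Matrix.one_apply];
         try ring)
    rw [hSub, det_fin_three, hs3]
    simp
    ring
  -- polynomial identity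
  have hpq : ((Finset.univ.val.map lam).map fun a => X - C a).prod
      = X * (X - C s) ^ 2 := by
    apply Polynomial.funext
    intro x
    rw [Polynomial.eval_multiset_prod, Multiset.map_map]
    have h1 : (Multiset.map ((fun p => Polynomial.eval x p) ∘ fun a => X - C a)
        (Finset.univ.val.map lam)).prod = ∏ i, (x - lam i) := by
      rw [Multiset.map_map]
      simp [Finset.prod]
    rw [h1, ← det_sub_eig _ hHerm, hdet]
    simp
  have hroots : Finset.univ.val.map lam = {s, s, 0} := by
    have h1 := Polynomial.roots_multiset_prod_X_sub_C (Finset.univ.val.map lam)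
    rw [hpq] at h1
    have hne : (X - C s) ^ 2 ≠ (0 : ℝ[X]) := ((monic_X_sub_C s).pow 2).ne_zero
    rw [Polynomial.roots_mul (mul_ne_zero Polynomial.X_ne_zero hne),
      Polynomial.roots_pow, Polynomial.roots_X_sub_C, Polynomial.roots_X] at h1
    rw [← h1, two_smul, add_comm]
    rfl
  have : (Finset.univ.val.map fun i : Fin 3 => Real.sqrt (lam i))
      = (Finset.univ.val.map lam).map Real.sqrt := by
    rw [Multiset.map_map]; rfl
  rw [this, hroots]
  simp [hs]
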